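/- Let G be a second countable locally compact group with Haar measure μ, and let F ⊆ G be closed with {gF : g ∈ G} of finite VC-dimension. Define ΔF = {x ∈ ∂F : μ(U ∩ ∂F) > 0 for every neighborhood U of x}. Then ΔF ⊆ cl(int F) ∩ cl(Fᶜ). -/

import Mathlib

open MeasureTheory Set Pointwise Topology

variable {G : Type*}

def Shatters (𝓕 : Set (Set G)) (A : Finset G) : Prop :=
  ∀ B ⊆ A, ∃ S ∈ 𝓕, S ∩ (A : Set G) = (B : Set G)

def FiniteVC (𝓕 : Set (Set G)) : Prop :=
  ∃ n : ℕ, ∀ A : Finset G, A.card = n → ¬ Shatters 𝓕 A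

open Filter
open scoped ENNReal symmDiff

/-!
If some open `U ∋ x` misses `interior F`, choose a compact neighbourhood `W` of `1` and a
neighbourhood `V` of `x` with `g⁻¹ • V ⊆ U` for `g ∈ W`. Since `F` has positive measure near `x`,
the set `E` of `g ∈ W` with `x ∈ g • F` has positive measure. Inductively there are points
`a₀, a₁, …` such that every trace pattern on `a₀, …, aₙ₋₁` is cut out by `g • F` for a
positive-measure set of `g ∈ E`, so translates of `F` shatter sets of every size. To add a point
`b`: for `b` near `x`, `b ∈ g • F` on a positive-measure part of each pattern set, by continuity
of translation in measure; and for `b` in a dense open subset of `V`, `b ∉ g • F` on a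
positive-measure part of each pattern set, since otherwise Fubini yields a `g • F` containing an
open subset of `V`, and then `g⁻¹ • V ⊆ U` meets `interior F`.
-/

theorem injective_of_forall_exists_mem_iff {𝓕 : Set (Set G)} {n : ℕ} {a : Fin n → G}
    (ha : ∀ I : Set (Fin n), ∃ S ∈ 𝓕, ∀ i, a i ∈ S ↔ i ∈ I) : Function.Injective a := by
  intro i j hij
  obtain ⟨S, -, hS⟩ := ha {i}
  exact ((hS j).1 (hij ▸ (hS i).2 rfl)).symm

theorem shatters_image_of_forall_exists_mem_iff [DecidableEq G] {𝓕 : Set (Set G)} {n : ℕ}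
    {a : Fin n → G} (ha : ∀ I : Set (Fin n), ∃ S ∈ 𝓕, ∀ i, a i ∈ S ↔ i ∈ I) :
    Shatters 𝓕 (Finset.univ.image a) := by
  intro B hB
  obtain ⟨S, hS𝓕, hS⟩ := ha {i | a i ∈ B}
  refine ⟨S, hS𝓕, ?_⟩
  ext y
  constructor
  · rintro ⟨hyS, hyA⟩
    obtain ⟨i, -, rfl⟩ := Finset.mem_image.1 hyA
    exact (hS i).1 hyS
  · intro hyB
    obtain ⟨i, -, rfl⟩ := Finset.mem_image.1 (hB hyB)
    exact ⟨(hS i).2 hyB, Finset.mem_coe.2 (hB hyB)⟩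

theorem not_finiteVC_of_forall_exists_mem_iff {𝓕 : Set (Set G)}
    (h : ∀ n, ∃ a : Fin n → G, ∀ I : Set (Fin n), ∃ S ∈ 𝓕, ∀ i, a i ∈ S ↔ i ∈ I) :
    ¬ FiniteVC 𝓕 := by
  classical
  rintro ⟨n, hn⟩
  obtain ⟨a, ha⟩ := h n
  refine hn _ ?_ (shatters_image_of_forall_exists_mem_iff ha)
  rw [Finset.card_image_of_injective _ (injective_of_forall_exists_mem_iff ha), Finset.card_univ,
    Fintype.card_fin]

theorem IsOpen.subset_closure_inter {X : Type*} [TopologicalSpace X] {S t u : Set X}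
    (hS : IsOpen S) (hu : IsOpen u) (hSt : S ⊆ closure t) (hSu : S ⊆ closure u) :
    S ⊆ closure (t ∩ u) := by
  have hSu_sub : S ∩ u ⊆ closure (t ∩ u) := fun y hy ↦
    closure_mono (t := t ∩ u) (fun z hz ↦ ⟨hz.2, hz.1.2⟩)
      ((hS.inter hu).inter_closure ⟨hy, hSt hy.1⟩)
  exact fun y hy ↦ closure_minimal hSu_sub isClosed_closure (hS.inter_closure ⟨hy, hSu hy⟩)

theorem IsOpen.subset_closure_iInter {X ι : Type*} [TopologicalSpace X] [Finite ι] {S : Set X}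
    {P : ι → Set X} (hS : IsOpen S) (hP : ∀ i, IsOpen (P i)) (hSP : ∀ i, S ⊆ closure (P i)) :
    S ⊆ closure (⋂ i, P i) := by
  classical
  cases nonempty_fintype ι
  suffices ∀ s : Finset ι, S ⊆ closure (⋂ i ∈ s, P i) by simpa using this Finset.univ
  intro s
  induction s using Finset.induction_on with
  | empty => simp
  | insert i s _ ih =>
    rw [Finset.set_biInter_insert]
    exact hS.subset_closure_inter (isOpen_biInter_finset fun j _ ↦ hP j) (hSP i) ih

section Realizers

variable [Group G]

def realizers (E F : Set G) {k : ℕ} (a : Fin k → G) (I : Set (Fin k)) : Set G :=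
  {g ∈ E | ∀ i, a i ∈ g • F ↔ i ∈ I}

theorem realizers_snoc (E F : Set G) {k : ℕ} (a : Fin k → G) (b : G) (J : Set (Fin (k + 1))) :
    realizers E F (Fin.snoc a b) J =
      {g ∈ realizers E F a (Fin.castSucc ⁻¹' J) | b ∈ g • F ↔ Fin.last k ∈ J} := by
  ext g
  simp [realizers, Fin.forall_fin_succ', and_assoc]

end Realizers

section Measurable

variable [Group G] [TopologicalSpace G] [IsTopologicalGroup G] [MeasurableSpace G] [BorelSpace G]

theorem measurableSet_setOf_mem_smul {F : Set G} (hF : MeasurableSet F) (p : G) :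
    MeasurableSet {g : G | p ∈ g • F} := by
  simp only [mem_smul_set_iff_inv_smul_mem, smul_eq_mul]
  exact (measurable_inv.mul_const p) hF

theorem measurableSet_realizers {E F : Set G} (hE : MeasurableSet E) (hF : MeasurableSet F)
    {k : ℕ} (a : Fin k → G) (I : Set (Fin k)) : MeasurableSet (realizers E F a I) :=
  hE.inter <| measurableSet_setOfPred.2 <| Measurable.forall fun i ↦
    (measurableSet_setOfPred.1 (measurableSet_setOf_mem_smul hF (a i))).iff measurable_const

end Measurable

section Haar

variable [Group G] [TopologicalSpace G] [IsTopologicalGroup G] [LocallyCompactSpace G]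
  [SecondCountableTopology G] [MeasurableSpace G] [BorelSpace G] {μ : Measure G} [μ.IsHaarMeasure]

theorem tendsto_measure_smul_symmDiff {A : Set G} (hA : NullMeasurableSet A μ)
    (hμA : μ A ≠ ∞) (p₀ : G) :
    Tendsto (fun p ↦ μ ((p • A) ∆ (p₀ • A))) (𝓝 p₀) (𝓝 0) := by
  let act : C(G, C(G, G)) := ContinuousMap.curry ⟨fun q : G × G ↦ q.1⁻¹ • q.2, by fun_prop⟩
  have hpre (p : G) : act p ⁻¹' A = p • A := by
    ext g; simp [act, mem_smul_set_iff_inv_smul_mem]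
  have hmp (p : G) : MeasurePreserving (act p) μ μ := measurePreserving_smul p⁻¹ μ
  simpa only [hpre] using tendsto_measure_symmDiff_preimage_nhds_zero
    (act.continuous.tendsto p₀) (.of_forall hmp) (hmp p₀) hA hμA

theorem isOpen_setOf_measure_setOf_mem_smul_pos {A : Set G} (hA : NullMeasurableSet A μ)
    (hμA : μ A ≠ ∞) (F : Set G) : IsOpen {p : G | 0 < μ {g ∈ A | p ∈ g • F}} := by
  have hshift (p : G) : μ {g ∈ A | p ∈ g • F} = μ (p⁻¹ • A ∩ F⁻¹) := by
    rw [← measure_smul μ p⁻¹]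
    congr 1
    ext g
    simp [mem_smul_set_iff_inv_smul_mem, mul_assoc]
  refine isOpen_iff_mem_nhds.2 fun p₀ hp₀ ↦ ?_
  have hlim := (tendsto_measure_smul_symmDiff hA hμA p₀⁻¹).comp (continuous_inv.tendsto p₀)
  filter_upwards [hlim.eventually (gt_mem_nhds hp₀)] with p hp
  simp only [mem_ofPred_eq, hshift, Function.comp_apply] at hp₀ hp ⊢
  refine pos_iff_ne_zero.2 fun h ↦ hp.not_ge ?_
  calc μ (p₀⁻¹ • A ∩ F⁻¹) ≤ μ ((p⁻¹ • A ∩ F⁻¹) ∪ (p⁻¹ • A) ∆ (p₀⁻¹ • A)) := by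
        refine measure_mono fun g ⟨hgA, hgF⟩ ↦ ?_
        by_cases hg : g ∈ p⁻¹ • A
        · exact .inl ⟨hg, hgF⟩
        · exact .inr (.inr ⟨hgA, hg⟩)
    _ ≤ μ ((p⁻¹ • A) ∆ (p₀⁻¹ • A)) := by
        grw [measure_union_le, h, zero_add]

theorem exists_mem_measure_setOf_notMem_smul_pos {A O F : Set G} (hF : IsClosed F)
    (hA : NullMeasurableSet A μ) (hμA : μ A ≠ 0) (hO : IsOpen O) (hAO : ∀ g ∈ A, ¬ O ⊆ g • F) :
    ∃ p ∈ O, 0 < μ {g ∈ A | p ∉ g • F} := by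
  by_contra! h
  have hmeas : MeasurableSet {q : G × G | q.1 ∈ q.2 • F} := by
    simp only [mem_smul_set_iff_inv_smul_mem, smul_eq_mul]
    exact (measurable_snd.inv.mul measurable_fst) hF.measurableSet
  have hO_ae : ∀ᵐ p ∂μ.restrict O, ∀ᵐ g ∂μ.restrict A, p ∈ g • F := by
    filter_upwards [ae_restrict_mem hO.measurableSet] with p hp
    rw [ae_restrict_iff (measurableSet_setOf_mem_smul hF.measurableSet p), ae_iff]
    simpa using le_zero_iff.1 (h p hp)
  have := ae_restrict_neBot.2 hμA
  obtain ⟨g, hgO, hgA⟩ := (((Measure.ae_ae_comm hmeas).1 hO_ae).and (ae_restrict_mem₀ hA)).exists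
  refine hAO g hgA (sdiff_eq_empty.1 <| ((hO.sdiff (hF.smul g)).measure_eq_zero_iff μ).1 ?_)
  rw [ae_restrict_iff' hO.measurableSet, ae_iff] at hgO
  simp only [Classical.not_imp] at hgO
  exact hgO

theorem measure_setOf_mem_smul_pos {W F : Set G} {x : G} (hW : W ∈ 𝓝 1)
    (hx : ∀ N ∈ 𝓝 x, 0 < μ (N ∩ F)) : 0 < μ {g ∈ W | x ∈ g • F} := by
  set N := (fun l ↦ x * l⁻¹) ⁻¹' W
  have hN : N ∈ 𝓝 x :=
    (continuous_const.mul continuous_inv).continuousAt.preimage_mem_nhds (by simpa using hW)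
  have hsub : x • (N ∩ F)⁻¹ ⊆ {g ∈ W | x ∈ g • F} := by
    rintro _ ⟨l, ⟨hlN, hlF⟩, rfl⟩
    refine ⟨by simpa [N] using hlN, ?_⟩
    simpa [mem_smul_set_iff_inv_smul_mem] using hlF
  refine (pos_iff_ne_zero.2 fun h ↦ ?_).trans_le (measure_mono hsub)
  rw [measure_smul, measure_inv_null] at h
  exact (hx N hN).ne' h

theorem exists_forall_realizers_snoc_pos {E F V : Set G} {x : G} (hF : IsClosed F)
    (hE : MeasurableSet E) (hμE : μ E ≠ ∞) (hEx : ∀ g ∈ E, x ∈ g • F) (hV : V ∈ 𝓝 x)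
    (hVE : ∀ g ∈ E, interior (V ∩ g • F) = ∅) {k : ℕ} {a : Fin k → G}
    (ha : ∀ I, 0 < μ (realizers E F a I)) :
    ∃ b, ∀ J, 0 < μ (realizers E F (Fin.snoc a b) J) := by
  set A := realizers E F a
  have hA (I : Set (Fin k)) : NullMeasurableSet (A I) μ :=
    (measurableSet_realizers hE hF.measurableSet a I).nullMeasurableSet
  have hμA (I : Set (Fin k)) : μ (A I) ≠ ∞ :=
    ne_top_of_le_ne_top hμE (measure_mono (sep_subset _ _))
  set Hit := interior V ∩ ⋂ I, {p | 0 < μ {g ∈ A I | p ∈ g • F}}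
  set Miss := fun I ↦ {p | 0 < μ {g ∈ A I | p ∉ g • F}}
  have hHit_open : IsOpen Hit := isOpen_interior.inter <| isOpen_iInter_of_finite fun I ↦
    isOpen_setOf_measure_setOf_mem_smul_pos (hA I) (hμA I) F
  have hxHit : x ∈ Hit := by
    refine ⟨mem_interior_iff_mem_nhds.2 hV, mem_iInter.2 fun I ↦ ?_⟩
    have : {g ∈ A I | x ∈ g • F} = A I := sep_eq_self_iff_mem_true.2 fun g hg ↦ hEx g hg.1
    simpa [this] using ha I
  have hMiss_open (I : Set (Fin k)) : IsOpen (Miss I) := by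
    simpa only [Miss, ← mem_compl_iff, ← smul_set_compl] using
      isOpen_setOf_measure_setOf_mem_smul_pos (hA I) (hμA I) Fᶜ
  have hHitMiss (I : Set (Fin k)) : Hit ⊆ closure (Miss I) := by
    refine fun p hp ↦ mem_closure_iff.2 fun O hO hpO ↦ ?_
    have hO' : IsOpen (O ∩ interior V) := hO.inter isOpen_interior
    have hAO : ∀ g ∈ A I, ¬ O ∩ interior V ⊆ g • F := fun g hg hOg ↦ by
      have := interior_maximal (subset_inter (inter_subset_right.trans interior_subset) hOg) hO'
      rw [hVE g hg.1] at this
      exact this ⟨hpO, hp.1⟩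
    obtain ⟨q, hq, hqMiss⟩ :=
      exists_mem_measure_setOf_notMem_smul_pos hF (hA I) (ha I).ne' hO' hAO
    exact ⟨q, hq.1, hqMiss⟩
  obtain ⟨b, hbHit, hbMiss⟩ :=
    mem_closure_iff.1 (hHit_open.subset_closure_iInter hMiss_open hHitMiss hxHit) Hit hHit_open hxHit
  refine ⟨b, fun J ↦ ?_⟩
  rw [realizers_snoc]
  by_cases hJ : Fin.last k ∈ J
  · simpa [hJ] using mem_iInter.1 hbHit.2 (Fin.castSucc ⁻¹' J)
  · simpa [hJ, Miss] using mem_iInter.1 hbMiss (Fin.castSucc ⁻¹' J)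

theorem exists_forall_realizers_pos {E F V : Set G} {x : G} (hF : IsClosed F)
    (hE : MeasurableSet E) (hμE : μ E ≠ ∞) (hμE₀ : 0 < μ E) (hEx : ∀ g ∈ E, x ∈ g • F)
    (hV : V ∈ 𝓝 x) (hVE : ∀ g ∈ E, interior (V ∩ g • F) = ∅) (n : ℕ) :
    ∃ a : Fin n → G, ∀ I, 0 < μ (realizers E F a I) := by
  induction n with
  | zero => exact ⟨Fin.elim0, fun I ↦ by simpa [realizers] using hμE₀⟩
  | succ k ih =>
    obtain ⟨a, ha⟩ := ih
    obtain ⟨b, hb⟩ := exists_forall_realizers_snoc_pos hF hE hμE hEx hV hVE ha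
    exact ⟨Fin.snoc a b, hb⟩

theorem mem_closure_interior_of_forall_measure_inter_pos {F : Set G}
    (hF : IsClosed F) (hVC : FiniteVC {S : Set G | ∃ g : G, S = g • F}) {x : G}
    (hx : ∀ N ∈ 𝓝 x, 0 < μ (N ∩ F)) : x ∈ closure (interior F) := by
  by_contra hxF
  obtain ⟨U, hU, hxU, hUF⟩ : ∃ U, IsOpen U ∧ x ∈ U ∧ U ∩ interior F = ∅ := by
    simpa [mem_closure_iff, not_nonempty_iff_eq_empty] using hxF
  have hUnhds : ∀ᶠ q in 𝓝 (1 : G) ×ˢ 𝓝 x, q.1⁻¹ * q.2 ∈ U := by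
    rw [← nhds_prod_eq]
    exact (continuous_fst.inv.mul continuous_snd).continuousAt.preimage_mem_nhds
      (by simpa using hU.mem_nhds hxU)
  obtain ⟨W₁, hW₁, V, hV, hWV⟩ := mem_prod_iff.1 hUnhds
  obtain ⟨W, ⟨hW, hWc, hWcl⟩, hWW₁⟩ := (isCompact_isClosed_basis_nhds (1 : G)).mem_iff.1 hW₁
  set E := {g ∈ W | x ∈ g • F}
  have hVE : ∀ g ∈ E, interior (V ∩ g • F) = ∅ := fun g hg ↦ by
    have hgV : g⁻¹ • V ⊆ U := by
      rintro _ ⟨v, hv, rfl⟩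
      exact hWV (mk_mem_prod (hWW₁ hg.1) hv)
    have : interior (g⁻¹ • V ∩ F) = ∅ := by
      rw [interior_inter, ← subset_empty_iff, ← hUF]
      exact inter_subset_inter_left _ ((interior_mono hgV).trans interior_subset)
    rw [← smul_inv_smul g V, ← smul_set_inter, interior_smul, this, smul_set_empty]
  refine not_finiteVC_of_forall_exists_mem_iff (fun n ↦ ?_) hVC
  obtain ⟨a, ha⟩ := exists_forall_realizers_pos hF
    (hWcl.measurableSet.inter (measurableSet_setOf_mem_smul hF.measurableSet x))
    (ne_top_of_le_ne_top hWc.measure_lt_top.ne (measure_mono (sep_subset _ _)))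
    (measure_setOf_mem_smul_pos hW hx) (fun g hg ↦ hg.2) hV hVE n
  refine ⟨a, fun I ↦ ?_⟩
  obtain ⟨g, hg⟩ := nonempty_of_measure_ne_zero (ha I).ne'
  exact ⟨g • F, ⟨g, rfl⟩, hg.2⟩

end Haar

theorem delta_subset_closure_int_inter_closure_compl_general
    [Group G] [TopologicalSpace G] [IsTopologicalGroup G]
    [LocallyCompactSpace G] [SecondCountableTopology G]
    [MeasurableSpace G] [BorelSpace G]
    (μ : Measure G) [μ.IsHaarMeasure]
    (F : Set G) (hF : IsClosed F)
    (hVC : FiniteVC {S : Set G | ∃ g : G, S = g • F}) :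
    {x ∈ frontier F | ∀ U ∈ nhds x, 0 < μ (U ∩ frontier F)} ⊆
      closure (interior F) ∩ closure Fᶜ := by
  rintro x ⟨hxF, hx⟩
  refine ⟨mem_closure_interior_of_forall_measure_inter_pos (μ := μ) hF hVC fun N hN ↦ ?_,
    frontier_subset_closure (by rwa [frontier_compl])⟩
  exact (hx N hN).trans_le (measure_mono (inter_subset_inter_right N hF.frontier_subset))

/-- For a closed VC-set `F`, the set `ΔF` of points of `∂F` all of whose
neighborhoods meet `∂F` in positive measure is contained in
`cl(int F) ∩ cl(Fᶜ)`. -/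
theorem delta_subset_closure_int_inter_closure_compl
    [Group G] [TopologicalSpace G] [IsTopologicalGroup G] [T2Space G]
    [LocallyCompactSpace G] [SecondCountableTopology G]
    [MeasurableSpace G] [BorelSpace G]
    (μ : Measure G) [μ.IsHaarMeasure]
    (F : Set G) (hF : IsClosed F)
    (hVC : FiniteVC {S : Set G | ∃ g : G, S = g • F}) :
    {x ∈ frontier F | ∀ U ∈ nhds x, 0 < μ (U ∩ frontier F)} ⊆
      closure (interior F) ∩ closure Fᶜ :=
  delta_subset_closure_int_inter_closure_compl_general μ F hF hVC
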